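/- For a Dirichlet character χ mod N with χ² not principal and integer k ≥ 1, the double sum S(X) = ∑_{b,c ≥ 1, bc ≤ X} χ(b)² b^{2k} is O(X^{2k}) as X → ∞. -/

import Mathlib

/-!
Write `∑_{bc ≤ X} = ∑_{c ≤ X} ψ(c) ∑_{b ≤ X/c} χ²(b) b^{2k}`. Since `χ²` is a nonprincipal
character mod `N`, its partial sums are bounded, so by summation by parts the inner sum is
`O((X/c)^{2k})`; summing over `c` gives `O(X^{2k} ∑ c⁻²) = O(X^{2k})` because `2k ≥ 2`.
-/

open Finset Real

namespace ZMod

variable {N : ℕ} [NeZero N] {M : Type*}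

theorem sum_range_natCast_add [AddCommMonoid M] (f : ZMod N → M) (n : ℕ) :
    ∑ b ∈ range N, f ((n + b : ℕ) : ZMod N) = ∑ a, f a := by
  rw [← Equiv.sum_comp (Equiv.addLeft (n : ZMod N))]
  refine sum_nbij' (fun b ↦ (b : ZMod N)) (fun a ↦ a.val) (by simp) (by simp [ZMod.val_lt])
    (fun b hb ↦ ZMod.val_cast_of_lt (mem_range.1 hb)) (fun a _ ↦ ZMod.natCast_zmod_val a) ?_
  intro b _
  simp

theorem sum_range_natCast_eq_sum_range_mod [AddCommMonoid M] {f : ZMod N → M}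
    (hf : ∑ a, f a = 0) (n : ℕ) :
    ∑ b ∈ range n, f (b : ZMod N) = ∑ b ∈ range (n % N), f (b : ZMod N) := by
  induction n using Nat.strong_induction_on with
  | _ n ih =>
    rcases lt_or_ge n N with hn | hn
    · rw [Nat.mod_eq_of_lt hn]
    · obtain ⟨m, rfl⟩ := Nat.exists_eq_add_of_le' hn
      rw [sum_range_add, sum_range_natCast_add, hf, add_zero, Nat.add_mod_right]
      exact ih m (by have := NeZero.pos N; omega)

theorem norm_sum_range_natCast_le [SeminormedAddCommGroup M] {f : ZMod N → M}
    (hf : ∑ a, f a = 0) (n : ℕ) :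
    ‖∑ b ∈ range n, f (b : ZMod N)‖ ≤ ∑ b ∈ range N, ‖f (b : ZMod N)‖ := by
  rw [sum_range_natCast_eq_sum_range_mod hf]
  exact (norm_sum_le _ _).trans <| sum_le_sum_of_subset_of_nonneg
    (range_subset_range.2 (Nat.mod_lt _ (NeZero.pos N)).le) fun _ _ _ ↦ norm_nonneg _

end ZMod

theorem DirichletCharacter.sq_eq_one_of_level_zero {R : Type*} [CommMonoidWithZero R]
    (χ : DirichletCharacter R 0) : χ ^ 2 = 1 := by
  ext u
  have hu : u * u = 1 := Int.units_mul_self u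
  rw [MulChar.pow_apply_coe, sq, ← map_mul, ← Units.val_mul, hu, Units.val_one, map_one,
    MulChar.one_apply_coe]

theorem norm_sum_range_smul_le_of_monotone {E : Type*} [SeminormedAddCommGroup E]
    [NormedSpace ℝ E] {a : ℕ → ℝ} (ha : Monotone a) (ha₀ : 0 ≤ a 0) {g : ℕ → E} {C : ℝ}
    (hC : ∀ n, ‖∑ i ∈ range n, g i‖ ≤ C) (n : ℕ) :
    ‖∑ i ∈ range n, a i • g i‖ ≤ 2 * C * a (n - 1) := by
  have hC₀ : 0 ≤ C := (norm_nonneg _).trans (hC 0)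
  have ha_nonneg : 0 ≤ a (n - 1) := ha₀.trans (ha (Nat.zero_le _))
  have ha_succ (i : ℕ) : 0 ≤ a (i + 1) - a i := sub_nonneg.2 (ha i.le_succ)
  rw [sum_range_by_parts]
  calc _ ≤ ‖a (n - 1) • ∑ i ∈ range n, g i‖
        + ∑ i ∈ range (n - 1), ‖(a (i + 1) - a i) • ∑ j ∈ range (i + 1), g j‖ :=
        (norm_sub_le _ _).trans (add_le_add le_rfl (norm_sum_le _ _))
    _ ≤ a (n - 1) * C + ∑ i ∈ range (n - 1), (a (i + 1) - a i) * C := by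
        simp only [norm_smul, Real.norm_of_nonneg ha_nonneg, Real.norm_of_nonneg (ha_succ _)]
        gcongr with i
        · exact hC n
        · exact ha_succ i
        · exact hC _
    _ = a (n - 1) * C + (a (n - 1) - a 0) * C := by rw [← sum_mul, sum_range_sub]
    _ ≤ 2 * C * a (n - 1) := by nlinarith [mul_nonneg ha₀ hC₀]

theorem norm_sum_Icc_mul_pow_le {g : ℕ → ℂ} {C : ℝ} (hC : ∀ n, ‖∑ i ∈ range n, g i‖ ≤ C)
    {K : ℕ} (hK : K ≠ 0) (Y : ℕ) :
    ‖∑ b ∈ Icc 1 Y, g b * (b : ℂ) ^ K‖ ≤ 2 * C * (Y : ℝ) ^ K := by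
  have hmono : Monotone fun i : ℕ ↦ (i : ℝ) ^ K :=
    fun i j hij ↦ pow_le_pow_left₀ (Nat.cast_nonneg i) (Nat.cast_le.2 hij) K
  have h := norm_sum_range_smul_le_of_monotone hmono (by positivity) hC (Y + 1)
  rw [range_eq_Ico, sum_eq_sum_Ico_succ_bot Y.succ_pos, Nat.cast_zero, zero_pow hK, zero_smul,
    zero_add, Nat.add_sub_cancel] at h
  simpa only [← Ico_add_one_right_eq_Icc, Complex.real_smul, Complex.ofReal_pow,
    Complex.ofReal_natCast, zero_add, Nat.succ_eq_add_one, mul_comm] using h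

theorem sum_filter_mul_le_eq_sum_sum {M : Type*} [AddCommMonoid M] (f : ℕ → ℕ → M) {X : ℝ}
    (hX : 0 ≤ X) :
    ∑ p ∈ (Icc 1 ⌊X⌋₊ ×ˢ Icc 1 ⌊X⌋₊).filter (fun p ↦ ((p.1 * p.2 : ℕ) : ℝ) ≤ X), f p.1 p.2 =
      ∑ c ∈ Icc 1 ⌊X⌋₊, ∑ b ∈ Icc 1 (⌊X⌋₊ / c), f b c := by
  rw [sum_filter, sum_product, sum_comm]
  refine sum_congr rfl fun c hc ↦ ?_
  have hc : 0 < c := (mem_Icc.1 hc).1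
  rw [← sum_filter]
  congr 1
  ext b
  simp only [mem_filter, mem_Icc, Nat.le_div_iff_mul_le hc, ← Nat.le_floor_iff hX]
  constructor
  · exact fun h ↦ ⟨h.1.1, h.2⟩
  · exact fun h ↦ ⟨⟨h.1, le_trans (Nat.le_mul_of_pos_right b hc) h.2⟩, h.2⟩

theorem sum_Icc_floor_div_pow_le {K : ℕ} (hK : 2 ≤ K) {X : ℝ} (hX : 0 ≤ X) :
    ∑ c ∈ Icc 1 ⌊X⌋₊, ((⌊X⌋₊ / c : ℕ) : ℝ) ^ K ≤ X ^ K * (π ^ 2 / 6) := by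
  have hterm (c : ℕ) (hc : 1 ≤ c) : ((⌊X⌋₊ / c : ℕ) : ℝ) ^ K ≤ X ^ K * (1 / (c : ℝ) ^ 2) := by
    calc ((⌊X⌋₊ / c : ℕ) : ℝ) ^ K ≤ (X / c) ^ K := by
          gcongr
          exact Nat.cast_div_le.trans (by gcongr; exact Nat.floor_le hX)
      _ = X ^ K * (1 / (c : ℝ) ^ K) := by rw [div_pow]; ring
      _ ≤ X ^ K * (1 / (c : ℝ) ^ 2) := by gcongr; exact Nat.one_le_cast.2 hc
  calc _ ≤ ∑ c ∈ Icc 1 ⌊X⌋₊, X ^ K * (1 / (c : ℝ) ^ 2) :=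
        sum_le_sum fun c hc ↦ hterm c (mem_Icc.1 hc).1
    _ ≤ X ^ K * (π ^ 2 / 6) := by
        rw [← mul_sum]
        gcongr
        exact sum_le_hasSum _ (fun n _ ↦ by positivity) hasSum_zeta_two

/-- For a Dirichlet character `χ mod N` with `χ²` not principal, any Dirichlet character `ψ`,
and `k ≥ 1`: `∑_{bc ≤ X} χ²(b) ψ(c) b^{2k} = O(X^{2k})`. -/
theorem hyperbola_sum_nonprincipal_isBigO (N N₂ : ℕ)
    (χ : DirichletCharacter ℂ N) (ψ : DirichletCharacter ℂ N₂)
    (hχ : χ ^ 2 ≠ 1) (k : ℕ) (hk : 1 ≤ k) :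
    (fun X : ℝ =>
      ∑ p ∈ (Icc 1 ⌊X⌋₊ ×ˢ Icc 1 ⌊X⌋₊).filter
          (fun p => ((p.1 * p.2 : ℕ) : ℝ) ≤ X),
        (χ (p.1 : ZMod N)) ^ 2 * ψ (p.2 : ZMod N₂) * (p.1 : ℂ) ^ (2 * k))
      =O[Filter.atTop] fun X : ℝ => X ^ (2 * k) := by
  have : NeZero N := ⟨by rintro rfl; exact hχ χ.sq_eq_one_of_level_zero⟩
  set C := ∑ b ∈ range N, ‖(χ ^ 2) (b : ZMod N)‖
  have hC (n : ℕ) : ‖∑ b ∈ range n, (χ ^ 2) (b : ZMod N)‖ ≤ C :=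
    ZMod.norm_sum_range_natCast_le (MulChar.sum_eq_zero_of_ne_one hχ) n
  have hC₀ : 0 ≤ C := (norm_nonneg _).trans (hC 0)
  refine Asymptotics.isBigO_iff.2 ⟨2 * C * (π ^ 2 / 6), ?_⟩
  filter_upwards [Filter.eventually_ge_atTop 0] with X hX
  rw [sum_filter_mul_le_eq_sum_sum
    (fun b c ↦ χ (b : ZMod N) ^ 2 * ψ (c : ZMod N₂) * (b : ℂ) ^ (2 * k)) hX,
    Real.norm_of_nonneg (by positivity)]
  have hinner (c : ℕ) : ‖∑ b ∈ Icc 1 (⌊X⌋₊ / c),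
      χ (b : ZMod N) ^ 2 * ψ (c : ZMod N₂) * (b : ℂ) ^ (2 * k)‖
        ≤ 2 * C * ((⌊X⌋₊ / c : ℕ) : ℝ) ^ (2 * k) := by
    simp_rw [← MulChar.pow_apply' χ two_ne_zero, mul_right_comm _ (ψ _), ← sum_mul, norm_mul]
    calc _ ≤ 2 * C * ((⌊X⌋₊ / c : ℕ) : ℝ) ^ (2 * k) * 1 := by
          gcongr
          · exact norm_sum_Icc_mul_pow_le hC (by omega) _
          · exact ψ.norm_le_one _
      _ = _ := mul_one _
  calc _ ≤ ∑ c ∈ Icc 1 ⌊X⌋₊, 2 * C * ((⌊X⌋₊ / c : ℕ) : ℝ) ^ (2 * k) :=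
        (norm_sum_le _ _).trans (sum_le_sum fun c _ ↦ hinner c)
    _ ≤ 2 * C * (X ^ (2 * k) * (π ^ 2 / 6)) := by
        rw [← mul_sum]
        gcongr
        exact sum_Icc_floor_div_pow_le (by omega) hX
    _ = 2 * C * (π ^ 2 / 6) * X ^ (2 * k) := by ring
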